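/- arXiv:1701.07050 — 2 statements merged into one kernel-verified Lean document; each statement's English description precedes it below -/
import Mathlib

section
/- Under the rank condition, the weighting matrices satisfy: Λ₂ = Λ₄ − Ψ₀; C₁Λ₁ = C₁Λ₂ = Ψ₀Λ₁ = Ψ₀Λ₂ = Ψ_RΛ_R = 0; C₁Λ₄ = (1/T)·C₁; Ψ₀Λ₄ = (1/T)·Ψ₀; and M₁Λ_lM₁ = Λ_l for l = 1, 2, 3, 4. -/
open Matrix

variable {T G k₁ k₂ : ℕ}

/-- Orthogonal projection `P̄[A] = A(AᵀA)⁻¹Aᵀ` onto the column space of `A`. -/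
noncomputable def projM {n : Type*} [Fintype n] [DecidableEq n]
    (A : Matrix (Fin T) n ℝ) : Matrix (Fin T) (Fin T) ℝ :=
  A * (Aᵀ * A)⁻¹ * Aᵀ

/-- The annihilator `M̄[A] = I - P̄[A]`. -/
noncomputable def annM {n : Type*} [Fintype n] [DecidableEq n]
    (A : Matrix (Fin T) n ℝ) : Matrix (Fin T) (Fin T) ℝ :=
  1 - projM A

noncomputable def M1 (X₁ : Matrix (Fin T) (Fin k₁) ℝ) : Matrix (Fin T) (Fin T) ℝ :=
  annM X₁

noncomputable def Pm (X₁ : Matrix (Fin T) (Fin k₁) ℝ) (X₂ : Matrix (Fin T) (Fin k₂) ℝ) :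
    Matrix (Fin T) (Fin T) ℝ :=
  projM (fromCols X₁ X₂)

noncomputable def Mm (X₁ : Matrix (Fin T) (Fin k₁) ℝ) (X₂ : Matrix (Fin T) (Fin k₂) ℝ) :
    Matrix (Fin T) (Fin T) ℝ :=
  annM (fromCols X₁ X₂)

noncomputable def N1 (X₁ : Matrix (Fin T) (Fin k₁) ℝ) (X₂ : Matrix (Fin T) (Fin k₂) ℝ) :
    Matrix (Fin T) (Fin T) ℝ :=
  M1 X₁ * Pm X₁ X₂

noncomputable def B1 (Y : Matrix (Fin T) (Fin G) ℝ) (X₁ : Matrix (Fin T) (Fin k₁) ℝ) :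
    Matrix (Fin G) (Fin T) ℝ :=
  (Yᵀ * M1 X₁ * Y)⁻¹ * (Yᵀ * M1 X₁)

noncomputable def B2 (Y : Matrix (Fin T) (Fin G) ℝ) (X₁ : Matrix (Fin T) (Fin k₁) ℝ)
    (X₂ : Matrix (Fin T) (Fin k₂) ℝ) : Matrix (Fin G) (Fin T) ℝ :=
  (Yᵀ * N1 X₁ X₂ * Y)⁻¹ * (Yᵀ * N1 X₁ X₂)

noncomputable def C1 (Y : Matrix (Fin T) (Fin G) ℝ) (X₁ : Matrix (Fin T) (Fin k₁) ℝ)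
    (X₂ : Matrix (Fin T) (Fin k₂) ℝ) : Matrix (Fin G) (Fin T) ℝ :=
  B2 Y X₁ X₂ - B1 Y X₁

/-- OLS estimator `β̂`. -/
noncomputable def betaOLS (y : Fin T → ℝ) (Y : Matrix (Fin T) (Fin G) ℝ)
    (X₁ : Matrix (Fin T) (Fin k₁) ℝ) : Fin G → ℝ :=
  B1 Y X₁ *ᵥ y

/-- 2SLS estimator `β̃`. -/
noncomputable def beta2S (y : Fin T → ℝ) (Y : Matrix (Fin T) (Fin G) ℝ)
    (X₁ : Matrix (Fin T) (Fin k₁) ℝ) (X₂ : Matrix (Fin T) (Fin k₂) ℝ) : Fin G → ℝ :=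
  B2 Y X₁ X₂ *ᵥ y

noncomputable def OmIV (Y : Matrix (Fin T) (Fin G) ℝ) (X₁ : Matrix (Fin T) (Fin k₁) ℝ)
    (X₂ : Matrix (Fin T) (Fin k₂) ℝ) : Matrix (Fin G) (Fin G) ℝ :=
  (T : ℝ)⁻¹ • (Yᵀ * N1 X₁ X₂ * Y)

noncomputable def OmLS (Y : Matrix (Fin T) (Fin G) ℝ) (X₁ : Matrix (Fin T) (Fin k₁) ℝ) :
    Matrix (Fin G) (Fin G) ℝ :=
  (T : ℝ)⁻¹ • (Yᵀ * M1 X₁ * Y)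

noncomputable def SigV (Y : Matrix (Fin T) (Fin G) ℝ) (X₁ : Matrix (Fin T) (Fin k₁) ℝ)
    (X₂ : Matrix (Fin T) (Fin k₂) ℝ) : Matrix (Fin G) (Fin G) ℝ :=
  (T : ℝ)⁻¹ • (Yᵀ * Mm X₁ X₂ * Y)

noncomputable def Dhat (Y : Matrix (Fin T) (Fin G) ℝ) (X₁ : Matrix (Fin T) (Fin k₁) ℝ)
    (X₂ : Matrix (Fin T) (Fin k₂) ℝ) : Matrix (Fin G) (Fin G) ℝ :=
  (OmIV Y X₁ X₂)⁻¹ - (OmLS Y X₁)⁻¹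

noncomputable def Psi0 (Y : Matrix (Fin T) (Fin G) ℝ) (X₁ : Matrix (Fin T) (Fin k₁) ℝ)
    (X₂ : Matrix (Fin T) (Fin k₂) ℝ) : Matrix (Fin T) (Fin T) ℝ :=
  (C1 Y X₁ X₂)ᵀ * (Dhat Y X₁ X₂)⁻¹ * C1 Y X₁ X₂

noncomputable def N2 (Y : Matrix (Fin T) (Fin G) ℝ) (X₁ : Matrix (Fin T) (Fin k₁) ℝ)
    (X₂ : Matrix (Fin T) (Fin k₂) ℝ) : Matrix (Fin T) (Fin T) ℝ :=
  1 - M1 X₁ * Y * B2 Y X₁ X₂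

noncomputable def Lam1 (Y : Matrix (Fin T) (Fin G) ℝ) (X₁ : Matrix (Fin T) (Fin k₁) ℝ)
    (X₂ : Matrix (Fin T) (Fin k₂) ℝ) : Matrix (Fin T) (Fin T) ℝ :=
  (T : ℝ)⁻¹ • (N1 X₁ X₂ * annM (N1 X₁ X₂ * Y) * N1 X₁ X₂)

noncomputable def Lam2 (Y : Matrix (Fin T) (Fin G) ℝ) (X₁ : Matrix (Fin T) (Fin k₁) ℝ)
    (X₂ : Matrix (Fin T) (Fin k₂) ℝ) : Matrix (Fin T) (Fin T) ℝ :=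
  M1 X₁ * ((T : ℝ)⁻¹ • annM (M1 X₁ * Y) - Psi0 Y X₁ X₂) * M1 X₁

noncomputable def Lam3 (Y : Matrix (Fin T) (Fin G) ℝ) (X₁ : Matrix (Fin T) (Fin k₁) ℝ)
    (X₂ : Matrix (Fin T) (Fin k₂) ℝ) : Matrix (Fin T) (Fin T) ℝ :=
  (T : ℝ)⁻¹ • (M1 X₁ * (N2 Y X₁ X₂)ᵀ * N2 Y X₁ X₂ * M1 X₁)

noncomputable def Lam4 (Y : Matrix (Fin T) (Fin G) ℝ) (X₁ : Matrix (Fin T) (Fin k₁) ℝ) :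
    Matrix (Fin T) (Fin T) ℝ :=
  (T : ℝ)⁻¹ • (M1 X₁ * annM (M1 X₁ * Y) * M1 X₁)

def Ybar (Y : Matrix (Fin T) (Fin G) ℝ) (X₁ : Matrix (Fin T) (Fin k₁) ℝ) :
    Matrix (Fin T) (Fin G ⊕ Fin k₁) ℝ :=
  fromCols Y X₁

def Zfull (Y : Matrix (Fin T) (Fin G) ℝ) (X₁ : Matrix (Fin T) (Fin k₁) ℝ)
    (X₂ : Matrix (Fin T) (Fin k₂) ℝ) : Matrix (Fin T) (Fin G ⊕ (Fin k₁ ⊕ Fin k₂)) ℝ :=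
  fromCols Y (fromCols X₁ X₂)

noncomputable def PsiR (Y : Matrix (Fin T) (Fin G) ℝ) (X₁ : Matrix (Fin T) (Fin k₁) ℝ)
    (X₂ : Matrix (Fin T) (Fin k₂) ℝ) : Matrix (Fin T) (Fin T) ℝ :=
  (T : ℝ)⁻¹ • (annM (Ybar Y X₁) - annM (Zfull Y X₁ X₂))

noncomputable def LamR (Y : Matrix (Fin T) (Fin G) ℝ) (X₁ : Matrix (Fin T) (Fin k₁) ℝ)
    (X₂ : Matrix (Fin T) (Fin k₂) ℝ) : Matrix (Fin T) (Fin T) ℝ :=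
  (T : ℝ)⁻¹ • annM (Zfull Y X₁ X₂)

/-- `σ̂² = (1/T)(y−Yβ̂)ᵀM₁(y−Yβ̂)`. -/
noncomputable def sigHat2 (y : Fin T → ℝ) (Y : Matrix (Fin T) (Fin G) ℝ)
    (X₁ : Matrix (Fin T) (Fin k₁) ℝ) : ℝ :=
  (T : ℝ)⁻¹ * ((y - Y *ᵥ betaOLS y Y X₁) ⬝ᵥ (M1 X₁ *ᵥ (y - Y *ᵥ betaOLS y Y X₁)))

/-- `σ̃² = (1/T)(y−Yβ̃)ᵀM₁(y−Yβ̃)`. -/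
noncomputable def sigTil2 (y : Fin T → ℝ) (Y : Matrix (Fin T) (Fin G) ℝ)
    (X₁ : Matrix (Fin T) (Fin k₁) ℝ) (X₂ : Matrix (Fin T) (Fin k₂) ℝ) : ℝ :=
  (T : ℝ)⁻¹ * ((y - Y *ᵥ beta2S y Y X₁ X₂) ⬝ᵥ (M1 X₁ *ᵥ (y - Y *ᵥ beta2S y Y X₁ X₂)))

/-- `σ̃₁² = (1/T)(y−Yβ̃)ᵀN₁(y−Yβ̃)`. -/
noncomputable def sigTil1sq (y : Fin T → ℝ) (Y : Matrix (Fin T) (Fin G) ℝ)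
    (X₁ : Matrix (Fin T) (Fin k₁) ℝ) (X₂ : Matrix (Fin T) (Fin k₂) ℝ) : ℝ :=
  (T : ℝ)⁻¹ * ((y - Y *ᵥ beta2S y Y X₁ X₂) ⬝ᵥ (N1 X₁ X₂ *ᵥ (y - Y *ᵥ beta2S y Y X₁ X₂)))

/-- `σ̃₂² = σ̂² − (β̃−β̂)ᵀΔ̂⁻¹(β̃−β̂)`. -/
noncomputable def sigTil2sq (y : Fin T → ℝ) (Y : Matrix (Fin T) (Fin G) ℝ)
    (X₁ : Matrix (Fin T) (Fin k₁) ℝ) (X₂ : Matrix (Fin T) (Fin k₂) ℝ) : ℝ :=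
  sigHat2 y Y X₁ -
    (beta2S y Y X₁ X₂ - betaOLS y Y X₁) ⬝ᵥ
      ((Dhat Y X₁ X₂)⁻¹ *ᵥ (beta2S y Y X₁ X₂ - betaOLS y Y X₁))

/-- The rank condition: `X₁`, `X = [X₁, X₂]`, `[Y, X]` and `[P̄[X]Y, X₁]` all have
full column rank. -/
def RankCond (Y : Matrix (Fin T) (Fin G) ℝ) (X₁ : Matrix (Fin T) (Fin k₁) ℝ)
    (X₂ : Matrix (Fin T) (Fin k₂) ℝ) : Prop :=
  X₁.rank = k₁ ∧ (fromCols X₁ X₂).rank = k₁ + k₂ ∧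
    (fromCols Y (fromCols X₁ X₂)).rank = G + (k₁ + k₂) ∧
    (fromCols (Pm X₁ X₂ * Y) X₁).rank = G + k₁

/-!
Everything reduces to the algebra of nested orthogonal projections: `P̄[X₁] ≤ P̄[X]` makes
`N₁ = P̄[X] − P̄[X₁]` a symmetric idempotent absorbed by `M₁ = N₁ + M̄[X]`, and `P̄[Ȳ] ≤ P̄[Z]`
gives `M̄[Ȳ]M̄[Z] = M̄[Z]`. Both estimators are GLS coefficient maps `(YᵀQY)⁻¹YᵀQ` with
`Q = M₁, N₁`, so `C₁M₁ = C₁`, `C₁M₁Y = 0`, `C₁N₁M̄[N₁Y] = 0` and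
`C₁C₁ᵀ = (YᵀN₁Y)⁻¹ − (YᵀM₁Y)⁻¹ = Δ̂ / T`. The last identity gives `C₁Ψ₀ = C₁ / T`, hence
`Ψ₀Ψ₀ = Ψ₀ / T`, and the rest is bookkeeping. The Gram matrices are invertible as Schur
complements in the Gram matrices of `[Y, X]` and `[P̄[X]Y, X₁]`, and because
`YᵀM₁Y = YᵀN₁Y + YᵀM̄[X]Y` is positive semidefinite plus positive definite.
-/

theorem Matrix.isUnit_of_rank_eq_card {n K : Type*} [Fintype n] [DecidableEq n] [Field K]
    {A : Matrix n n K} (h : A.rank = Fintype.card n) : IsUnit A := by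
  rw [← mulVec_surjective_iff_isUnit]
  have hrange : LinearMap.range A.mulVecLin = ⊤ :=
    Submodule.eq_top_of_finrank_eq (by rwa [Module.finrank_fintype_fun_eq_card])
  exact LinearMap.range_eq_top.mp hrange

theorem Matrix.isUnit_transpose_mul_self_of_rank_eq {m n : Type*} [Fintype m] [Fintype n]
    [DecidableEq n] {A : Matrix m n ℝ} (h : A.rank = Fintype.card n) : IsUnit (Aᵀ * A) :=
  isUnit_of_rank_eq_card (by rwa [rank_transpose_mul_self])

theorem Matrix.inv_smul₀ {n : Type*} [Fintype n] [DecidableEq n] {c : ℝ} (hc : c ≠ 0)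
    {A : Matrix n n ℝ} (hA : IsUnit A) : (c • A)⁻¹ = c⁻¹ • A⁻¹ :=
  inv_eq_left_inv (by
    rw [smul_mul_smul_comm, inv_mul_cancel₀ hc, nonsing_inv_mul _ ((isUnit_iff_isUnit_det _).mp hA),
      one_smul])

section Idempotent

variable {m n : Type*} [Fintype m] {Q : Matrix m m ℝ} (hQt : Qᵀ = Q) (hQ : Q * Q = Q)
  (Y : Matrix m n ℝ)
include hQt hQ

theorem Matrix.transpose_mul_mul_eq_of_idempotent : Yᵀ * Q * Y = (Q * Y)ᵀ * (Q * Y) := by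
  rw [transpose_mul, hQt, ← Matrix.mul_assoc, Matrix.mul_assoc Yᵀ Q Q, hQ]

theorem Matrix.posSemidef_transpose_mul_mul_of_idempotent [Fintype n] :
    (Yᵀ * Q * Y).PosSemidef := by
  rw [transpose_mul_mul_eq_of_idempotent hQt hQ, ← conjTranspose_eq_transpose_of_trivial]
  exact posSemidef_conjTranspose_mul_self _

end Idempotent

section Projection

variable {n m : Type*} [Fintype n] [DecidableEq n]
  {A : Matrix (Fin T) n ℝ}

theorem projM_transpose (A : Matrix (Fin T) n ℝ) : (projM A)ᵀ = projM A := by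
  simp [projM, transpose_mul, transpose_nonsing_inv, Matrix.mul_assoc]

theorem annM_transpose (A : Matrix (Fin T) n ℝ) : (annM A)ᵀ = annM A := by
  simp [annM, projM_transpose]

theorem projM_mul_self (hA : IsUnit (Aᵀ * A)) : projM A * A = A := by
  rw [projM, Matrix.mul_assoc, Matrix.mul_assoc,
    nonsing_inv_mul _ ((isUnit_iff_isUnit_det _).mp hA), Matrix.mul_one]

theorem projM_mul_of_mul_eq (hA : IsUnit (Aᵀ * A)) {B : Matrix (Fin T) m ℝ} (E : Matrix n m ℝ)
    (hE : A * E = B) : projM A * B = B := by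
  rw [← hE, ← Matrix.mul_assoc, projM_mul_self hA]

theorem transpose_mul_annM (hA : IsUnit (Aᵀ * A)) : Aᵀ * annM A = 0 := by
  have h := congrArg transpose (projM_mul_self hA)
  rw [transpose_mul, projM_transpose] at h
  rw [annM, Matrix.mul_sub, Matrix.mul_one, h, sub_self]

section Nested

variable [Fintype m] [DecidableEq m] {B : Matrix (Fin T) m ℝ} (hB : projM A * B = B)
include hB

theorem projM_mul_projM_of_projM_mul_eq : projM A * projM B = projM B := by
  rw [show projM B = B * (Bᵀ * B)⁻¹ * Bᵀ from rfl, ← Matrix.mul_assoc, ← Matrix.mul_assoc, hB]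

theorem projM_mul_projM_of_projM_mul_eq' : projM B * projM A = projM B := by
  have h := congrArg transpose (projM_mul_projM_of_projM_mul_eq hB)
  rwa [transpose_mul, projM_transpose, projM_transpose] at h

theorem annM_mul_annM_of_projM_mul_eq : annM B * annM A = annM A := by
  simp only [annM, Matrix.sub_mul, Matrix.mul_sub, Matrix.one_mul, Matrix.mul_one,
    projM_mul_projM_of_projM_mul_eq' hB]
  abel

end Nested

theorem projM_mul_projM (hA : IsUnit (Aᵀ * A)) : projM A * projM A = projM A :=
  projM_mul_projM_of_projM_mul_eq (projM_mul_self hA)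

theorem annM_mul_annM (hA : IsUnit (Aᵀ * A)) : annM A * annM A = annM A :=
  annM_mul_annM_of_projM_mul_eq (projM_mul_self hA)

/-- The Schur complement of `AᵀA` in the Gram matrix of `[B, A]` is `Bᵀ M̄[A] B`. -/
theorem isUnit_transpose_mul_annM_mul [Fintype m] [DecidableEq m] (hA : IsUnit (Aᵀ * A))
    (B : Matrix (Fin T) m ℝ) (h : IsUnit ((fromCols B A)ᵀ * fromCols B A)) :
    IsUnit (Bᵀ * annM A * B) := by
  have : Invertible (Aᵀ * A) := hA.invertible
  rw [transpose_fromCols, fromRows_mul_fromCols, isUnit_fromBlocks_iff_of_invertible₂₂,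
    invOf_eq_nonsing_inv] at h
  convert h using 1
  simp only [annM, projM, Matrix.mul_sub, Matrix.sub_mul, Matrix.mul_one, Matrix.mul_assoc]

end Projection

noncomputable def glsCoef {m n : Type*} [Fintype m] [Fintype n] [DecidableEq n]
    (Q : Matrix m m ℝ) (Y : Matrix m n ℝ) : Matrix n m ℝ :=
  (Yᵀ * Q * Y)⁻¹ * (Yᵀ * Q)

section GLS

variable {m n : Type*} [Fintype m] [Fintype n] [DecidableEq n] {Q R : Matrix m m ℝ}
  (Y : Matrix m n ℝ)

theorem glsCoef_mul_of_mul_eq {Q' : Matrix m m ℝ} (h : Q * R = Q') :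
    glsCoef Q Y * R = (Yᵀ * Q * Y)⁻¹ * (Yᵀ * Q') := by
  rw [glsCoef, Matrix.mul_assoc (Yᵀ * Q * Y)⁻¹, Matrix.mul_assoc Yᵀ Q R, h]

theorem glsCoef_mul_of_mul_eq_self (h : Q * R = Q) : glsCoef Q Y * R = glsCoef Q Y :=
  glsCoef_mul_of_mul_eq Y h

theorem glsCoef_mul_mul_of_mul_eq (h : Q * R = Q) (hQ : IsUnit (Yᵀ * Q * Y)) :
    glsCoef Q Y * (R * Y) = 1 := by
  rw [← Matrix.mul_assoc, glsCoef_mul_of_mul_eq Y h, Matrix.mul_assoc,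
    nonsing_inv_mul _ ((isUnit_iff_isUnit_det _).mp hQ)]

omit [Fintype n] [DecidableEq n] in
theorem transpose_gram_of_transpose_eq (hQ : Qᵀ = Q) : (Yᵀ * Q * Y)ᵀ = Yᵀ * Q * Y := by
  rw [transpose_mul, transpose_mul, transpose_transpose, hQ, Matrix.mul_assoc]

theorem glsCoef_transpose (hQ : Qᵀ = Q) : (glsCoef Q Y)ᵀ = Q * Y * (Yᵀ * Q * Y)⁻¹ := by
  rw [glsCoef, transpose_mul, transpose_nonsing_inv, transpose_gram_of_transpose_eq Y hQ,
    transpose_mul, transpose_transpose, hQ]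

theorem glsCoef_mul_glsCoef_transpose (hR : Rᵀ = R) (h : Q * R = Q) (hQ : IsUnit (Yᵀ * Q * Y)) :
    glsCoef Q Y * (glsCoef R Y)ᵀ = (Yᵀ * R * Y)⁻¹ := by
  rw [glsCoef_transpose Y hR, ← Matrix.mul_assoc, glsCoef_mul_mul_of_mul_eq Y h hQ, Matrix.one_mul]

end GLS

section Model

variable {X₁ : Matrix (Fin T) (Fin k₁) ℝ} {X₂ : Matrix (Fin T) (Fin k₂) ℝ}

theorem M1_transpose (X₁ : Matrix (Fin T) (Fin k₁) ℝ) : (M1 X₁)ᵀ = M1 X₁ := annM_transpose X₁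

theorem M1_mul_M1 (hX₁ : IsUnit (X₁ᵀ * X₁)) : M1 X₁ * M1 X₁ = M1 X₁ := annM_mul_annM hX₁

theorem Pm_transpose (X₁ : Matrix (Fin T) (Fin k₁) ℝ) (X₂ : Matrix (Fin T) (Fin k₂) ℝ) :
    (Pm X₁ X₂)ᵀ = Pm X₁ X₂ :=
  projM_transpose _

section

variable (hX : IsUnit ((fromCols X₁ X₂)ᵀ * fromCols X₁ X₂))
include hX

theorem Pm_mul_Pm : Pm X₁ X₂ * Pm X₁ X₂ = Pm X₁ X₂ := projM_mul_projM hX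

theorem Pm_mul_X₁ : Pm X₁ X₂ * X₁ = X₁ :=
  projM_mul_of_mul_eq hX (fromRows 1 0) (by simp [fromCols_mul_fromRows])

theorem projM_mul_Pm : projM X₁ * Pm X₁ X₂ = projM X₁ :=
  projM_mul_projM_of_projM_mul_eq' (Pm_mul_X₁ hX)

theorem Pm_mul_projM : Pm X₁ X₂ * projM X₁ = projM X₁ :=
  projM_mul_projM_of_projM_mul_eq (Pm_mul_X₁ hX)

theorem N1_eq_Pm_sub_projM : N1 X₁ X₂ = Pm X₁ X₂ - projM X₁ := by
  rw [N1, M1, annM, Matrix.sub_mul, Matrix.one_mul, projM_mul_Pm hX]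

theorem N1_transpose : (N1 X₁ X₂)ᵀ = N1 X₁ X₂ := by
  rw [N1_eq_Pm_sub_projM hX, transpose_sub, Pm_transpose, projM_transpose]

theorem M1_eq_N1_add_Mm : M1 X₁ = N1 X₁ X₂ + Mm X₁ X₂ := by
  rw [N1_eq_Pm_sub_projM hX, M1, Mm, annM, annM, Pm]
  abel

theorem Pm_mul_M1_mul_Pm : Pm X₁ X₂ * M1 X₁ * Pm X₁ X₂ = N1 X₁ X₂ := by
  rw [N1_eq_Pm_sub_projM hX, M1, annM, Matrix.mul_sub, Matrix.mul_one, Matrix.sub_mul,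
    Pm_mul_Pm hX, Pm_mul_projM hX, projM_mul_Pm hX]

end

variable (hX₁ : IsUnit (X₁ᵀ * X₁)) (hX : IsUnit ((fromCols X₁ X₂)ᵀ * fromCols X₁ X₂))
include hX₁ hX

theorem N1_mul_N1 : N1 X₁ X₂ * N1 X₁ X₂ = N1 X₁ X₂ := by
  simp only [N1_eq_Pm_sub_projM hX, Matrix.sub_mul, Matrix.mul_sub, Pm_mul_Pm hX,
    projM_mul_projM hX₁, Pm_mul_projM hX, projM_mul_Pm hX]
  abel

theorem M1_mul_N1 : M1 X₁ * N1 X₁ X₂ = N1 X₁ X₂ := by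
  simp only [N1_eq_Pm_sub_projM hX, M1, annM, Matrix.sub_mul, Matrix.mul_sub, Matrix.one_mul,
    projM_mul_projM hX₁, projM_mul_Pm hX]
  abel

theorem N1_mul_M1 : N1 X₁ X₂ * M1 X₁ = N1 X₁ X₂ := by
  simp only [N1_eq_Pm_sub_projM hX, M1, annM, Matrix.sub_mul, Matrix.mul_sub, Matrix.mul_one,
    projM_mul_projM hX₁, Pm_mul_projM hX]
  abel

variable (Y : Matrix (Fin T) (Fin G) ℝ)

theorem isUnit_gram_N1 (hW : IsUnit ((fromCols (Pm X₁ X₂ * Y) X₁)ᵀ * fromCols (Pm X₁ X₂ * Y) X₁)) :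
    IsUnit (Yᵀ * N1 X₁ X₂ * Y) := by
  have h := isUnit_transpose_mul_annM_mul hX₁ _ hW
  have e : (Pm X₁ X₂ * Y)ᵀ * annM X₁ * (Pm X₁ X₂ * Y) = Yᵀ * N1 X₁ X₂ * Y := by
    rw [transpose_mul, Pm_transpose, ← Pm_mul_M1_mul_Pm hX, M1]
    simp only [Matrix.mul_assoc]
  rwa [e] at h

theorem isUnit_gram_M1 (hGM : IsUnit (Yᵀ * Mm X₁ X₂ * Y)) :
    IsUnit (Yᵀ * M1 X₁ * Y) := by
  have hN := posSemidef_transpose_mul_mul_of_idempotent (N1_transpose hX) (N1_mul_N1 hX₁ hX) Y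
  have hM := posSemidef_transpose_mul_mul_of_idempotent (annM_transpose _) (annM_mul_annM hX) Y
  rw [M1_eq_N1_add_Mm hX, Matrix.mul_add, Matrix.add_mul]
  exact (PosDef.posSemidef_add hN (hM.posDef_iff_isUnit.mpr hGM)).isUnit

end Model

section Weighting

theorem C1_eq_glsCoef_sub_glsCoef (Y : Matrix (Fin T) (Fin G) ℝ) (X₁ : Matrix (Fin T) (Fin k₁) ℝ)
    (X₂ : Matrix (Fin T) (Fin k₂) ℝ) :
    C1 Y X₁ X₂ = glsCoef (N1 X₁ X₂) Y - glsCoef (M1 X₁) Y :=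
  rfl

theorem Psi0_mul (Y : Matrix (Fin T) (Fin G) ℝ) (X₁ : Matrix (Fin T) (Fin k₁) ℝ)
    (X₂ : Matrix (Fin T) (Fin k₂) ℝ) (W : Matrix (Fin T) (Fin T) ℝ) :
    Psi0 Y X₁ X₂ * W = (C1 Y X₁ X₂)ᵀ * (Dhat Y X₁ X₂)⁻¹ * (C1 Y X₁ X₂ * W) := by
  rw [Psi0, Matrix.mul_assoc]

theorem Psi0_mul_of_C1_mul_eq_smul {Y : Matrix (Fin T) (Fin G) ℝ} {X₁ : Matrix (Fin T) (Fin k₁) ℝ}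
    {X₂ : Matrix (Fin T) (Fin k₂) ℝ} {W : Matrix (Fin T) (Fin T) ℝ} {a : ℝ}
    (h : C1 Y X₁ X₂ * W = a • C1 Y X₁ X₂) : Psi0 Y X₁ X₂ * W = a • Psi0 Y X₁ X₂ := by
  rw [Psi0_mul, h, Matrix.mul_smul, Psi0]

variable {Y : Matrix (Fin T) (Fin G) ℝ} {X₁ : Matrix (Fin T) (Fin k₁) ℝ}
  {X₂ : Matrix (Fin T) (Fin k₂) ℝ}

theorem Dhat_eq_smul (hT : (T : ℝ) ≠ 0) (hGN : IsUnit (Yᵀ * N1 X₁ X₂ * Y))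
    (hGL : IsUnit (Yᵀ * M1 X₁ * Y)) :
    Dhat Y X₁ X₂ = (T : ℝ) • ((Yᵀ * N1 X₁ X₂ * Y)⁻¹ - (Yᵀ * M1 X₁ * Y)⁻¹) := by
  rw [Dhat, OmIV, OmLS, inv_smul₀ (inv_ne_zero hT) hGN, inv_smul₀ (inv_ne_zero hT) hGL, inv_inv,
    smul_sub]

theorem isUnit_Dhat (hT : (T : ℝ) ≠ 0) (hX : IsUnit ((fromCols X₁ X₂)ᵀ * fromCols X₁ X₂))
    (hGN : IsUnit (Yᵀ * N1 X₁ X₂ * Y)) (hGL : IsUnit (Yᵀ * M1 X₁ * Y))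
    (hGM : IsUnit (Yᵀ * Mm X₁ X₂ * Y)) : IsUnit (Dhat Y X₁ X₂) := by
  have h : (Yᵀ * N1 X₁ X₂ * Y)⁻¹ - (Yᵀ * M1 X₁ * Y)⁻¹
      = (Yᵀ * N1 X₁ X₂ * Y)⁻¹ * (Yᵀ * Mm X₁ X₂ * Y) * (Yᵀ * M1 X₁ * Y)⁻¹ := by
    rw [show Yᵀ * Mm X₁ X₂ * Y = Yᵀ * M1 X₁ * Y - Yᵀ * N1 X₁ X₂ * Y by
        rw [M1_eq_N1_add_Mm hX, Matrix.mul_add, Matrix.add_mul, add_sub_cancel_left],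
      Matrix.mul_sub, Matrix.sub_mul,
      mul_nonsing_inv_cancel_right _ _ ((isUnit_iff_isUnit_det _).mp hGL),
      nonsing_inv_mul _ ((isUnit_iff_isUnit_det _).mp hGN), Matrix.one_mul]
  rw [Dhat_eq_smul hT hGN hGL, h]
  exact (((isUnit_nonsing_inv_iff.mpr hGN).mul hGM).mul (isUnit_nonsing_inv_iff.mpr hGL)).smul
    (Units.mk0 _ hT)

variable (hX₁ : IsUnit (X₁ᵀ * X₁)) (hX : IsUnit ((fromCols X₁ X₂)ᵀ * fromCols X₁ X₂))
include hX₁ hX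

theorem C1_mul_M1 : C1 Y X₁ X₂ * M1 X₁ = C1 Y X₁ X₂ := by
  rw [C1_eq_glsCoef_sub_glsCoef, Matrix.sub_mul, glsCoef_mul_of_mul_eq_self Y (N1_mul_M1 hX₁ hX),
    glsCoef_mul_of_mul_eq_self Y (M1_mul_M1 hX₁)]

theorem M1_mul_Psi0_mul_M1 : M1 X₁ * Psi0 Y X₁ X₂ * M1 X₁ = Psi0 Y X₁ X₂ := by
  have hM1C1 : M1 X₁ * (C1 Y X₁ X₂)ᵀ = (C1 Y X₁ X₂)ᵀ := by
    rw [← M1_transpose, ← transpose_mul, C1_mul_M1 hX₁ hX]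
  rw [Matrix.mul_assoc, Psi0_mul, C1_mul_M1 hX₁ hX, ← Matrix.mul_assoc, ← Matrix.mul_assoc, hM1C1,
    Psi0]

theorem Lam2_eq_Lam4_sub_Psi0 : Lam2 Y X₁ X₂ = Lam4 Y X₁ - Psi0 Y X₁ X₂ := by
  rw [Lam2, Matrix.mul_sub, Matrix.sub_mul, M1_mul_Psi0_mul_M1 hX₁ hX, Lam4, Matrix.mul_smul,
    Matrix.smul_mul]

variable (hGN : IsUnit (Yᵀ * N1 X₁ X₂ * Y))
include hGN

/-- `C₁N₁ = ((YᵀN₁Y)⁻¹ − (YᵀM₁Y)⁻¹)YᵀN₁`, and `YᵀN₁ = (N₁Y)ᵀ` is killed by `M̄[N₁Y]`. -/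
theorem C1_mul_Lam1 : C1 Y X₁ X₂ * Lam1 Y X₁ X₂ = 0 := by
  have hC1N1 : C1 Y X₁ X₂ * N1 X₁ X₂
      = ((Yᵀ * N1 X₁ X₂ * Y)⁻¹ - (Yᵀ * M1 X₁ * Y)⁻¹) * (Yᵀ * N1 X₁ X₂) := by
    rw [C1_eq_glsCoef_sub_glsCoef, Matrix.sub_mul, Matrix.sub_mul,
      glsCoef_mul_of_mul_eq Y (N1_mul_N1 hX₁ hX), glsCoef_mul_of_mul_eq Y (M1_mul_N1 hX₁ hX)]
  have hgram := transpose_mul_mul_eq_of_idempotent (N1_transpose hX) (N1_mul_N1 hX₁ hX) Y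
  have hann : Yᵀ * N1 X₁ X₂ * annM (N1 X₁ X₂ * Y) = 0 := by
    rw [← N1_transpose hX, ← transpose_mul, N1_transpose hX]
    exact transpose_mul_annM (hgram ▸ hGN)
  rw [Lam1, Matrix.mul_smul, ← Matrix.mul_assoc, ← Matrix.mul_assoc, hC1N1,
    Matrix.mul_assoc _ _ (annM _), hann, Matrix.mul_zero, Matrix.zero_mul, smul_zero]

variable (hGL : IsUnit (Yᵀ * M1 X₁ * Y))
include hGL

theorem C1_mul_Lam4 : C1 Y X₁ X₂ * Lam4 Y X₁ = (T : ℝ)⁻¹ • C1 Y X₁ X₂ := by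
  have hC1Y : C1 Y X₁ X₂ * (M1 X₁ * Y) = 0 := by
    rw [C1_eq_glsCoef_sub_glsCoef, Matrix.sub_mul,
      glsCoef_mul_mul_of_mul_eq Y (N1_mul_M1 hX₁ hX) hGN,
      glsCoef_mul_mul_of_mul_eq Y (M1_mul_M1 hX₁) hGL, sub_self]
  have hC1ann : C1 Y X₁ X₂ * annM (M1 X₁ * Y) = C1 Y X₁ X₂ := by
    rw [annM, projM, Matrix.mul_sub, Matrix.mul_one, ← Matrix.mul_assoc, ← Matrix.mul_assoc,
      hC1Y, Matrix.zero_mul, Matrix.zero_mul, sub_zero]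
  rw [Lam4, Matrix.mul_smul, ← Matrix.mul_assoc, ← Matrix.mul_assoc, C1_mul_M1 hX₁ hX, hC1ann,
    C1_mul_M1 hX₁ hX]

theorem C1_mul_C1_transpose :
    C1 Y X₁ X₂ * (C1 Y X₁ X₂)ᵀ = (Yᵀ * N1 X₁ X₂ * Y)⁻¹ - (Yᵀ * M1 X₁ * Y)⁻¹ := by
  have hNM := glsCoef_mul_glsCoef_transpose Y (M1_transpose X₁) (N1_mul_M1 hX₁ hX) hGN
  have hMN : glsCoef (M1 X₁) Y * (glsCoef (N1 X₁ X₂) Y)ᵀ = (Yᵀ * M1 X₁ * Y)⁻¹ := by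
    rw [← transpose_transpose (glsCoef (M1 X₁) Y), ← transpose_mul, hNM, transpose_nonsing_inv,
      transpose_gram_of_transpose_eq Y (M1_transpose X₁)]
  rw [C1_eq_glsCoef_sub_glsCoef, transpose_sub, Matrix.sub_mul, Matrix.mul_sub, Matrix.mul_sub,
    hNM, hMN, glsCoef_mul_glsCoef_transpose Y (N1_transpose hX) (N1_mul_N1 hX₁ hX) hGN,
    glsCoef_mul_glsCoef_transpose Y (M1_transpose X₁) (M1_mul_M1 hX₁) hGL]
  abel

variable (hT : (T : ℝ) ≠ 0) (hGM : IsUnit (Yᵀ * Mm X₁ X₂ * Y))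
include hT hGM

theorem C1_mul_Psi0 : C1 Y X₁ X₂ * Psi0 Y X₁ X₂ = (T : ℝ)⁻¹ • C1 Y X₁ X₂ := by
  have hDhat := isUnit_Dhat hT hX hGN hGL hGM
  rw [Psi0, ← Matrix.mul_assoc, ← Matrix.mul_assoc, C1_mul_C1_transpose hX₁ hX hGN hGL,
    ← inv_smul_smul₀ hT ((Yᵀ * N1 X₁ X₂ * Y)⁻¹ - (Yᵀ * M1 X₁ * Y)⁻¹), ← Dhat_eq_smul hT hGN hGL,
    Matrix.smul_mul, Matrix.smul_mul,
    mul_nonsing_inv _ ((isUnit_iff_isUnit_det _).mp hDhat), Matrix.one_mul]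

end Weighting

theorem Matrix.mul_smul_mul_mul_mul {n : Type*} [Fintype n] {Q L R : Matrix n n ℝ}
    (hL : Q * L = L) (hR : R * Q = R) (c : ℝ) (K : Matrix n n ℝ) :
    Q * (c • (L * K * R)) * Q = c • (L * K * R) := by
  rw [Matrix.mul_smul, Matrix.smul_mul, ← Matrix.mul_assoc, ← Matrix.mul_assoc, hL,
    Matrix.mul_assoc (L * K), hR]

section Sandwich

variable {Y : Matrix (Fin T) (Fin G) ℝ} {X₁ : Matrix (Fin T) (Fin k₁) ℝ}
  {X₂ : Matrix (Fin T) (Fin k₂) ℝ} (hX₁ : IsUnit (X₁ᵀ * X₁))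
include hX₁

theorem M1_mul_Lam4_mul_M1 : M1 X₁ * Lam4 Y X₁ * M1 X₁ = Lam4 Y X₁ :=
  mul_smul_mul_mul_mul (M1_mul_M1 hX₁) (M1_mul_M1 hX₁) _ _

theorem M1_mul_Lam3_mul_M1 : M1 X₁ * Lam3 Y X₁ X₂ * M1 X₁ = Lam3 Y X₁ X₂ := by
  simp only [Lam3, Matrix.mul_assoc (M1 X₁) (N2 Y X₁ X₂)ᵀ]
  exact mul_smul_mul_mul_mul (M1_mul_M1 hX₁) (M1_mul_M1 hX₁) _ _

theorem M1_mul_Lam1_mul_M1 (hX : IsUnit ((fromCols X₁ X₂)ᵀ * fromCols X₁ X₂)) :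
    M1 X₁ * Lam1 Y X₁ X₂ * M1 X₁ = Lam1 Y X₁ X₂ :=
  mul_smul_mul_mul_mul (M1_mul_N1 hX₁ hX) (N1_mul_M1 hX₁ hX) _ _

end Sandwich

theorem PsiR_mul_LamR {Y : Matrix (Fin T) (Fin G) ℝ} {X₁ : Matrix (Fin T) (Fin k₁) ℝ}
    {X₂ : Matrix (Fin T) (Fin k₂) ℝ} (hZ : IsUnit ((Zfull Y X₁ X₂)ᵀ * Zfull Y X₁ X₂)) :
    PsiR Y X₁ X₂ * LamR Y X₁ X₂ = 0 := by
  have hYbar : projM (Zfull Y X₁ X₂) * Ybar Y X₁ = Ybar Y X₁ :=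
    projM_mul_of_mul_eq hZ (fromBlocks 1 0 0 (fromRows 1 0))
      (by simp [Zfull, Ybar, fromCols_mul_fromBlocks, fromCols_mul_fromRows])
  rw [PsiR, LamR, Matrix.smul_mul, Matrix.mul_smul, Matrix.sub_mul,
    annM_mul_annM_of_projM_mul_eq hYbar, annM_mul_annM hZ, sub_self, smul_zero, smul_zero]

theorem RankCond.isUnit_grams {Y : Matrix (Fin T) (Fin G) ℝ} {X₁ : Matrix (Fin T) (Fin k₁) ℝ}
    {X₂ : Matrix (Fin T) (Fin k₂) ℝ} (h : RankCond Y X₁ X₂) :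
    IsUnit (X₁ᵀ * X₁) ∧ IsUnit ((fromCols X₁ X₂)ᵀ * fromCols X₁ X₂) ∧
      IsUnit ((Zfull Y X₁ X₂)ᵀ * Zfull Y X₁ X₂) ∧
      IsUnit ((fromCols (Pm X₁ X₂ * Y) X₁)ᵀ * fromCols (Pm X₁ X₂ * Y) X₁) := by
  obtain ⟨h₁, h₂, h₃, h₄⟩ := h
  exact ⟨isUnit_transpose_mul_self_of_rank_eq (by simpa using h₁),
    isUnit_transpose_mul_self_of_rank_eq (by simpa using h₂),
    isUnit_transpose_mul_self_of_rank_eq (by simpa [Zfull] using h₃),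
    isUnit_transpose_mul_self_of_rank_eq (by simpa using h₄)⟩

theorem stmt9_general {T G k₁ k₂ : ℕ}
    (hT : 0 < T)
    (Y : Matrix (Fin T) (Fin G) ℝ)
    (X₁ : Matrix (Fin T) (Fin k₁) ℝ) (X₂ : Matrix (Fin T) (Fin k₂) ℝ)
    (hrank : RankCond Y X₁ X₂) :
    Lam2 Y X₁ X₂ = Lam4 Y X₁ - Psi0 Y X₁ X₂ ∧
    C1 Y X₁ X₂ * Lam1 Y X₁ X₂ = 0 ∧
    C1 Y X₁ X₂ * Lam2 Y X₁ X₂ = 0 ∧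
    Psi0 Y X₁ X₂ * Lam1 Y X₁ X₂ = 0 ∧
    Psi0 Y X₁ X₂ * Lam2 Y X₁ X₂ = 0 ∧
    PsiR Y X₁ X₂ * LamR Y X₁ X₂ = 0 ∧
    C1 Y X₁ X₂ * Lam4 Y X₁ = (T : ℝ)⁻¹ • C1 Y X₁ X₂ ∧
    Psi0 Y X₁ X₂ * Lam4 Y X₁ = (T : ℝ)⁻¹ • Psi0 Y X₁ X₂ ∧
    M1 X₁ * Lam1 Y X₁ X₂ * M1 X₁ = Lam1 Y X₁ X₂ ∧
    M1 X₁ * Lam2 Y X₁ X₂ * M1 X₁ = Lam2 Y X₁ X₂ ∧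
    M1 X₁ * Lam3 Y X₁ X₂ * M1 X₁ = Lam3 Y X₁ X₂ ∧
    M1 X₁ * Lam4 Y X₁ * M1 X₁ = Lam4 Y X₁ := by
  obtain ⟨hX₁, hX, hZ, hW⟩ := hrank.isUnit_grams
  have hT' : (T : ℝ) ≠ 0 := by positivity
  have hGM : IsUnit (Yᵀ * Mm X₁ X₂ * Y) := isUnit_transpose_mul_annM_mul hX Y hZ
  have hGN := isUnit_gram_N1 hX₁ hX Y hW
  have hGL := isUnit_gram_M1 hX₁ hX Y hGM
  have hLam2 := Lam2_eq_Lam4_sub_Psi0 (Y := Y) hX₁ hX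
  have hC1Lam1 := C1_mul_Lam1 hX₁ hX hGN
  have hC1Lam4 := C1_mul_Lam4 hX₁ hX hGN hGL
  have hC1Psi0 := C1_mul_Psi0 hX₁ hX hGN hGL hT' hGM
  have hPsi0Lam4 := Psi0_mul_of_C1_mul_eq_smul hC1Lam4
  refine ⟨hLam2, hC1Lam1, ?_, ?_, ?_, PsiR_mul_LamR hZ, hC1Lam4, hPsi0Lam4,
    M1_mul_Lam1_mul_M1 hX₁ hX, ?_, M1_mul_Lam3_mul_M1 hX₁, M1_mul_Lam4_mul_M1 hX₁⟩
  · rw [hLam2, Matrix.mul_sub, hC1Lam4, hC1Psi0, sub_self]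
  · rw [Psi0_mul, hC1Lam1, Matrix.mul_zero]
  · rw [hLam2, Matrix.mul_sub, hPsi0Lam4, Psi0_mul_of_C1_mul_eq_smul hC1Psi0, sub_self]
  · rw [hLam2, Matrix.mul_sub, Matrix.sub_mul, M1_mul_Lam4_mul_M1 hX₁, M1_mul_Psi0_mul_M1 hX₁ hX]

/-- **Properties of the weighting matrices.**  Under the rank condition:
`Λ₂ = Λ₄ − Ψ₀`; `C₁Λ₁ = C₁Λ₂ = Ψ₀Λ₁ = Ψ₀Λ₂ = Ψ_RΛ_R = 0`; `C₁Λ₄ = (1/T)C₁`;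
`Ψ₀Λ₄ = (1/T)Ψ₀`; and `M₁Λ_lM₁ = Λ_l` for `l = 1, 2, 3, 4`. -/
theorem stmt9 {T G k₁ k₂ : ℕ}
    (hT : 0 < T) (hG : 0 < G) (hk₁ : 0 < k₁) (hk₂ : 0 < k₂)
    (Y : Matrix (Fin T) (Fin G) ℝ)
    (X₁ : Matrix (Fin T) (Fin k₁) ℝ) (X₂ : Matrix (Fin T) (Fin k₂) ℝ)
    (hrank : RankCond Y X₁ X₂) :
    Lam2 Y X₁ X₂ = Lam4 Y X₁ - Psi0 Y X₁ X₂ ∧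
    C1 Y X₁ X₂ * Lam1 Y X₁ X₂ = 0 ∧
    C1 Y X₁ X₂ * Lam2 Y X₁ X₂ = 0 ∧
    Psi0 Y X₁ X₂ * Lam1 Y X₁ X₂ = 0 ∧
    Psi0 Y X₁ X₂ * Lam2 Y X₁ X₂ = 0 ∧
    PsiR Y X₁ X₂ * LamR Y X₁ X₂ = 0 ∧
    C1 Y X₁ X₂ * Lam4 Y X₁ = (T : ℝ)⁻¹ • C1 Y X₁ X₂ ∧
    Psi0 Y X₁ X₂ * Lam4 Y X₁ = (T : ℝ)⁻¹ • Psi0 Y X₁ X₂ ∧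
    M1 X₁ * Lam1 Y X₁ X₂ * M1 X₁ = Lam1 Y X₁ X₂ ∧
    M1 X₁ * Lam2 Y X₁ X₂ * M1 X₁ = Lam2 Y X₁ X₂ ∧
    M1 X₁ * Lam3 Y X₁ X₂ * M1 X₁ = Lam3 Y X₁ X₂ ∧
    M1 X₁ * Lam4 Y X₁ * M1 X₁ = Lam4 Y X₁ :=
  stmt9_general hT Y X₁ X₂ hrank
end

section
/- (Quadratic-form representations of the Wu statistics.) Under the rank condition, for each l ∈ {1,2,3,4} with σ̃_l² ≠ 0 (where σ̃₁², σ̃₂², σ̃₃² := σ̃², σ̃₄² := σ̂² are the respective scaling factors), the matrix Σ̃_l = σ̃_l²·Δ̂ is invertible and the Wu statistic satisfies T_l := κ_l·(β̃−β̂)ᵀΣ̃_l⁻¹(β̃−β̂) = κ_l·(yᵀΨ₀y)/(yᵀΛ_ly). -/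
open Matrix

variable {T G k₁ k₂ : ℕ}

/-!
The variance estimates are quadratic forms in `y`. For a symmetric idempotent `K` (here `M₁`, or
`N₁ = P̄[X] - P̄[X₁]`), the `K`-weighted regression residual `(I - Y B) y` satisfies
`K (I - Y B) = M̄[KY] K`, so its squared `K`-length is `yᵀ K M̄[KY] K y`: this gives `Λ₁` and `Λ₄`.
The `M₁`-length of the 2SLS residual is `yᵀ Λ₃ y` since `N₂ M₁ = M₁ (I - Y B₂)`, and
`Λ₂ = Λ₄ - Ψ₀` because `C₁ M₁ = C₁`. As `β̃ - β̂ = C₁ y`, the numerator is `yᵀ Ψ₀ y`. Finally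
`M₁ - N₁ = M` gives `Ω̂_LS - Ω̂_IV = Σ̂_V`, so `Δ̂ = Ω̂_IV⁻¹ Σ̂_V Ω̂_LS⁻¹` is invertible, the rank
condition making all three Gram matrices invertible.
-/

namespace Matrix

variable {l m n : Type*} {R : Type*}

theorem mulVec_injective_of_rank_eq_card [Fintype n] [Field R] {A : Matrix m n R}
    (h : A.rank = Fintype.card n) : Function.Injective A.mulVec := by
  rw [mulVec_injective_iff, linearIndependent_iff_card_eq_finrank_span, ← h,
    rank_eq_finrank_span_cols]
  rfl

theorem isUnit_transpose_mul_self_of_injective [Fintype m] [Fintype n] [DecidableEq n]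
    [Field R] [LinearOrder R] [IsStrictOrderedRing R] {A : Matrix m n R}
    (hA : Function.Injective A.mulVec) : IsUnit (Aᵀ * A) := by
  rw [← mulVec_injective_iff_isUnit, ← coe_mulVecLin, ← LinearMap.ker_eq_bot,
    ker_mulVecLin_transpose_mul_self, LinearMap.ker_eq_bot]
  exact hA

theorem eq_zero_of_mulVec_eq_of_injective_fromCols [Fintype l] [Fintype n] [Ring R]
    {A : Matrix m n R} {B : Matrix m l R} (hAB : Function.Injective (fromCols A B).mulVec)
    {v : n → R} {w : l → R} (h : A *ᵥ v = B *ᵥ w) : v = 0 := by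
  have h0 : fromCols A B *ᵥ Sum.elim v (-w) = fromCols A B *ᵥ 0 := by
    rw [fromCols_mulVec_sumElim, mulVec_neg, h, add_neg_cancel, mulVec_zero]
  funext i
  exact congrFun (hAB h0) (Sum.inl i)

theorem sub_mulVec_mulVec_eq [Fintype m] [Fintype n] [DecidableEq m] [CommRing R] (Y : Matrix m n R)
    (B : Matrix n m R) (y : m → R) : y - Y *ᵥ (B *ᵥ y) = (1 - Y * B) *ᵥ y := by
  rw [sub_mulVec, one_mulVec, mulVec_mulVec]

theorem dotProduct_transpose_mul_mul_mulVec [Fintype m] [Fintype n] [CommSemiring R]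
    (C : Matrix m n R) (A : Matrix m m R) (y : n → R) :
    y ⬝ᵥ ((Cᵀ * A * C) *ᵥ y) = (C *ᵥ y) ⬝ᵥ (A *ᵥ (C *ᵥ y)) := by
  rw [← mulVec_mulVec, ← mulVec_mulVec, dotProduct_mulVec, vecMul_transpose]

theorem dotProduct_transpose_mul_self_mulVec [Fintype m] [Fintype n] [CommSemiring R]
    (C : Matrix m n R) (y : n → R) :
    y ⬝ᵥ ((Cᵀ * C) *ᵥ y) = (C *ᵥ y) ⬝ᵥ (C *ᵥ y) := by
  rw [← mulVec_mulVec, dotProduct_mulVec, vecMul_transpose]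

section SymmIdempotent

variable [Fintype m] [CommRing R] {K L : Matrix m m R}

theorem transpose_mul_self_of_isSymm_of_idem (hs : K.IsSymm) (hi : IsIdempotentElem K) :
    Kᵀ * K = K := by
  rw [hs.eq, hi.eq]

theorem dotProduct_mulVec_self_of_isSymm_of_idem (hs : K.IsSymm) (hi : IsIdempotentElem K)
    (v : m → R) : v ⬝ᵥ (K *ᵥ v) = (K *ᵥ v) ⬝ᵥ (K *ᵥ v) := by
  conv_lhs => rw [← transpose_mul_self_of_isSymm_of_idem hs hi,
    dotProduct_transpose_mul_self_mulVec]

theorem gram_mul_of_isSymm_of_idem (hs : K.IsSymm) (hi : IsIdempotentElem K)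
    (Y : Matrix m n R) : (K * Y)ᵀ * (K * Y) = Yᵀ * K * Y := by
  rw [transpose_mul, Matrix.mul_assoc, ← Matrix.mul_assoc Kᵀ,
    transpose_mul_self_of_isSymm_of_idem hs hi, Matrix.mul_assoc]

theorem mul_mul_eq_transpose_mul_self (hK : K.IsSymm) (hs : L.IsSymm)
    (hi : IsIdempotentElem L) : K * L * K = (L * K)ᵀ * (L * K) := by
  rw [gram_mul_of_isSymm_of_idem hs hi, hK.eq]

end SymmIdempotent

section Inverse

variable [Fintype n] [DecidableEq n]

theorem isUnit_inv_sub_inv [CommRing R] {A B : Matrix n n R} (hA : IsUnit A) (hB : IsUnit B)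
    (hBA : IsUnit (B - A)) : IsUnit (A⁻¹ - B⁻¹) := by
  have h : A⁻¹ - B⁻¹ = A⁻¹ * (B - A) * B⁻¹ := by
    rw [Matrix.mul_sub, Matrix.sub_mul, Matrix.mul_assoc,
      mul_nonsing_inv _ ((isUnit_iff_isUnit_det _).mp hB),
      nonsing_inv_mul _ ((isUnit_iff_isUnit_det _).mp hA), Matrix.mul_one, Matrix.one_mul]
  rw [h]
  exact ((isUnit_nonsing_inv_iff.mpr hA).mul hBA).mul (isUnit_nonsing_inv_iff.mpr hB)

theorem isUnit_smul_of_ne_zero [Field R] {c : R} (hc : c ≠ 0) {A : Matrix n n R}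
    (hA : IsUnit A) : IsUnit (c • A) :=
  (isUnit_smul_iff (Units.mk0 c hc) A).mpr hA

theorem dotProduct_inv_smul_mulVec [Field R] {c : R} (hc : c ≠ 0) {A : Matrix n n R}
    (hA : IsUnit A) (d : n → R) : d ⬝ᵥ ((c • A)⁻¹ *ᵥ d) = d ⬝ᵥ (A⁻¹ *ᵥ d) / c := by
  have := invertibleOfNonzero hc
  rw [inv_smul A c ((isUnit_iff_isUnit_det A).mp hA), invOf_eq_inv, smul_mulVec,
    dotProduct_smul, smul_eq_mul, inv_mul_eq_div]

end Inverse

end Matrix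

open Matrix

section Projection

variable {l n : Type*} [Fintype n] [DecidableEq n]

theorem projM_isSymm (A : Matrix (Fin T) n ℝ) : (projM A).IsSymm := by
  simp [projM, IsSymm, transpose_mul, transpose_nonsing_inv, Matrix.mul_assoc]

theorem projM_mul_self_s12 {A : Matrix (Fin T) n ℝ} (h : IsUnit (Aᵀ * A)) : projM A * A = A := by
  rw [projM, Matrix.mul_assoc, Matrix.mul_assoc,
    nonsing_inv_mul _ ((isUnit_iff_isUnit_det _).mp h), Matrix.mul_one]

theorem projM_mul_of_eq_mul {A : Matrix (Fin T) n ℝ} {B : Matrix (Fin T) l ℝ}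
    (h : IsUnit (Aᵀ * A)) {E : Matrix n l ℝ} (hB : B = A * E) : projM A * B = B := by
  rw [hB, ← Matrix.mul_assoc, projM_mul_self_s12 h]

theorem projM_mul_projM_of_mul_eq [Fintype l] [DecidableEq l] {A : Matrix (Fin T) n ℝ}
    {B : Matrix (Fin T) l ℝ} (hAB : projM A * B = B) : projM A * projM B = projM B := by
  rw [projM.eq_1 B, ← Matrix.mul_assoc, ← Matrix.mul_assoc, hAB]

theorem isIdempotentElem_projM {A : Matrix (Fin T) n ℝ} (h : IsUnit (Aᵀ * A)) :
    IsIdempotentElem (projM A) :=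
  projM_mul_projM_of_mul_eq (projM_mul_self_s12 h)

theorem annM_isSymm (A : Matrix (Fin T) n ℝ) : (annM A).IsSymm := by
  rw [IsSymm, annM, transpose_sub, transpose_one, (projM_isSymm A).eq]

theorem isIdempotentElem_annM {A : Matrix (Fin T) n ℝ} (h : IsUnit (Aᵀ * A)) :
    IsIdempotentElem (annM A) :=
  (isIdempotentElem_projM h).one_sub

theorem exists_mulVec_eq_of_annM_mulVec_eq_zero {A : Matrix (Fin T) n ℝ} {z : Fin T → ℝ}
    (h : annM A *ᵥ z = 0) : ∃ w, z = A *ᵥ w :=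
  ⟨(Aᵀ * A)⁻¹ *ᵥ (Aᵀ *ᵥ z), by
    rwa [annM, sub_mulVec, one_mulVec, sub_eq_zero, projM, ← mulVec_mulVec,
      ← mulVec_mulVec] at h⟩

theorem annM_mul_mulVec_injective [Fintype l] {A : Matrix (Fin T) l ℝ} {B : Matrix (Fin T) n ℝ}
    (h : ∀ v w, A *ᵥ v = B *ᵥ w → v = 0) : Function.Injective (annM B * A).mulVec := by
  intro u v huv
  have hz : annM B *ᵥ (A *ᵥ (u - v)) = 0 := by
    rw [mulVec_mulVec, mulVec_sub, huv, sub_self]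
  obtain ⟨w, hw⟩ := exists_mulVec_eq_of_annM_mulVec_eq_zero hz
  exact sub_eq_zero.mp (h _ w hw)

end Projection

section WeightedResidual

variable {m : Type*} [Fintype m] [DecidableEq m] {K : Matrix (Fin T) (Fin T) ℝ}

theorem mul_one_sub_mul_eq_annM_mul (hs : K.IsSymm) (hi : IsIdempotentElem K)
    (Y : Matrix (Fin T) m ℝ) :
    K * (1 - Y * ((Yᵀ * K * Y)⁻¹ * (Yᵀ * K))) = annM (K * Y) * K := by
  rw [annM, projM, gram_mul_of_isSymm_of_idem hs hi, transpose_mul, hs.eq]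
  simp only [Matrix.mul_sub, Matrix.sub_mul, Matrix.mul_one, Matrix.one_mul, Matrix.mul_assoc,
    hi.eq]

theorem dotProduct_residual_mulVec_residual (hs : K.IsSymm) (hi : IsIdempotentElem K)
    {Y : Matrix (Fin T) m ℝ} (hu : IsUnit (Yᵀ * K * Y)) (y : Fin T → ℝ) :
    ((1 - Y * ((Yᵀ * K * Y)⁻¹ * (Yᵀ * K))) *ᵥ y) ⬝ᵥ
        (K *ᵥ ((1 - Y * ((Yᵀ * K * Y)⁻¹ * (Yᵀ * K))) *ᵥ y)) =
      y ⬝ᵥ ((K * annM (K * Y) * K) *ᵥ y) := by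
  rw [← gram_mul_of_isSymm_of_idem hs hi] at hu
  rw [dotProduct_mulVec_self_of_isSymm_of_idem hs hi, mulVec_mulVec,
    mul_one_sub_mul_eq_annM_mul hs hi,
    mul_mul_eq_transpose_mul_self hs (annM_isSymm _) (isIdempotentElem_annM hu),
    dotProduct_transpose_mul_self_mulVec]

end WeightedResidual

section WuModel

variable {y : Fin T → ℝ} {Y : Matrix (Fin T) (Fin G) ℝ} {X₁ : Matrix (Fin T) (Fin k₁) ℝ}
  {X₂ : Matrix (Fin T) (Fin k₂) ℝ}

theorem M1_isSymm (X₁ : Matrix (Fin T) (Fin k₁) ℝ) : (M1 X₁).IsSymm :=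
  annM_isSymm X₁

theorem dotProduct_Psi0_mulVec :
    y ⬝ᵥ (Psi0 Y X₁ X₂ *ᵥ y) =
      (beta2S y Y X₁ X₂ - betaOLS y Y X₁) ⬝ᵥ
        ((Dhat Y X₁ X₂)⁻¹ *ᵥ (beta2S y Y X₁ X₂ - betaOLS y Y X₁)) := by
  rw [Psi0, dotProduct_transpose_mul_mul_mulVec, C1, sub_mulVec, beta2S, betaOLS]

namespace RankCond

variable (h : RankCond Y X₁ X₂)
include h

theorem isUnit_gram_X₁ : IsUnit (X₁ᵀ * X₁) :=
  isUnit_transpose_mul_self_of_injective <| mulVec_injective_of_rank_eq_card <| by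
    simpa using h.1

theorem isUnit_gram_X : IsUnit ((fromCols X₁ X₂)ᵀ * fromCols X₁ X₂) :=
  isUnit_transpose_mul_self_of_injective <| mulVec_injective_of_rank_eq_card <| by
    simpa using h.2.1

theorem injective_Y_X : Function.Injective (fromCols Y (fromCols X₁ X₂)).mulVec :=
  mulVec_injective_of_rank_eq_card <| by simpa using h.2.2.1

theorem isIdempotentElem_M1 : IsIdempotentElem (M1 X₁) :=
  isIdempotentElem_annM h.isUnit_gram_X₁

theorem Pm_mul_projM : Pm X₁ X₂ * projM X₁ = projM X₁ :=
  projM_mul_projM_of_mul_eq <|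
    projM_mul_of_eq_mul h.isUnit_gram_X (E := fromRows 1 0) (by simp [fromCols_mul_fromRows])

theorem projM_mul_Pm : projM X₁ * Pm X₁ X₂ = projM X₁ := by
  have := congrArg transpose h.Pm_mul_projM
  rwa [transpose_mul, (projM_isSymm _).eq, Pm, (projM_isSymm _).eq] at this

theorem N1_eq_Pm_sub_projM : N1 X₁ X₂ = Pm X₁ X₂ - projM X₁ := by
  rw [N1, M1, annM, Matrix.sub_mul, Matrix.one_mul, h.projM_mul_Pm]

theorem N1_isSymm : (N1 X₁ X₂).IsSymm := by
  rw [h.N1_eq_Pm_sub_projM]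
  exact (projM_isSymm _).sub (projM_isSymm _)

theorem isIdempotentElem_N1 : IsIdempotentElem (N1 X₁ X₂) := by
  rw [h.N1_eq_Pm_sub_projM]
  exact (isIdempotentElem_projM h.isUnit_gram_X₁).sub (isIdempotentElem_projM h.isUnit_gram_X)
    h.projM_mul_Pm h.Pm_mul_projM

theorem N1_mul_M1 : N1 X₁ X₂ * M1 X₁ = N1 X₁ X₂ := by
  rw [h.N1_eq_Pm_sub_projM, M1, annM, Matrix.mul_sub, Matrix.mul_one, Matrix.sub_mul,
    h.Pm_mul_projM, (isIdempotentElem_projM h.isUnit_gram_X₁).eq, sub_self, sub_zero]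

theorem Mm_eq_M1_sub_N1 : Mm X₁ X₂ = M1 X₁ - N1 X₁ X₂ := by
  rw [h.N1_eq_Pm_sub_projM, Mm, M1, annM, annM, Pm]
  abel

theorem isUnit_gram_M1 : IsUnit (Yᵀ * M1 X₁ * Y) := by
  rw [← gram_mul_of_isSymm_of_idem (M1_isSymm X₁) h.isIdempotentElem_M1, M1]
  refine isUnit_transpose_mul_self_of_injective <| annM_mul_mulVec_injective fun v w hvw =>
    eq_zero_of_mulVec_eq_of_injective_fromCols h.injective_Y_X (w := Sum.elim w 0) ?_
  rwa [fromCols_mulVec_sumElim, mulVec_zero, add_zero]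

theorem isUnit_gram_N1 : IsUnit (Yᵀ * N1 X₁ X₂ * Y) := by
  rw [← gram_mul_of_isSymm_of_idem h.N1_isSymm h.isIdempotentElem_N1, N1, M1, Matrix.mul_assoc]
  exact isUnit_transpose_mul_self_of_injective <| annM_mul_mulVec_injective fun _ _ hvw =>
    eq_zero_of_mulVec_eq_of_injective_fromCols
      (mulVec_injective_of_rank_eq_card (by simpa using h.2.2.2)) hvw

theorem isUnit_gram_Mm : IsUnit (Yᵀ * Mm X₁ X₂ * Y) := by
  rw [Mm, ← gram_mul_of_isSymm_of_idem (annM_isSymm _) (isIdempotentElem_annM h.isUnit_gram_X)]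
  exact isUnit_transpose_mul_self_of_injective <| annM_mul_mulVec_injective fun _ _ hvw =>
    eq_zero_of_mulVec_eq_of_injective_fromCols h.injective_Y_X hvw

theorem isUnit_Dhat (hT : 0 < T) : IsUnit (Dhat Y X₁ X₂) := by
  have hT' : (T : ℝ)⁻¹ ≠ 0 := by positivity
  refine isUnit_inv_sub_inv (isUnit_smul_of_ne_zero hT' h.isUnit_gram_N1)
    (isUnit_smul_of_ne_zero hT' h.isUnit_gram_M1) ?_
  rw [OmLS, OmIV, ← smul_sub, ← Matrix.sub_mul, ← Matrix.mul_sub, ← h.Mm_eq_M1_sub_N1]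
  exact isUnit_smul_of_ne_zero hT' h.isUnit_gram_Mm

theorem B2_mul_M1 : B2 Y X₁ X₂ * M1 X₁ = B2 Y X₁ X₂ := by
  rw [B2, Matrix.mul_assoc, Matrix.mul_assoc Yᵀ (N1 X₁ X₂) (M1 X₁), h.N1_mul_M1]

theorem C1_mul_M1 : C1 Y X₁ X₂ * M1 X₁ = C1 Y X₁ X₂ := by
  rw [C1, Matrix.sub_mul, h.B2_mul_M1, B1, Matrix.mul_assoc,
    Matrix.mul_assoc Yᵀ (M1 X₁) (M1 X₁), h.isIdempotentElem_M1.eq]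

theorem Lam2_eq_Lam4_sub_Psi0 : Lam2 Y X₁ X₂ = Lam4 Y X₁ - Psi0 Y X₁ X₂ := by
  have hC : M1 X₁ * (C1 Y X₁ X₂)ᵀ = (C1 Y X₁ X₂)ᵀ := by
    rw [← (M1_isSymm X₁).eq, ← transpose_mul, h.C1_mul_M1]
  rw [Lam2, Lam4, Matrix.mul_sub, Matrix.sub_mul, Matrix.mul_smul, Matrix.smul_mul, Psi0,
    ← Matrix.mul_assoc, ← Matrix.mul_assoc, hC,
    Matrix.mul_assoc ((C1 Y X₁ X₂)ᵀ * (Dhat Y X₁ X₂)⁻¹), h.C1_mul_M1]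

theorem dotProduct_Lam1_mulVec : y ⬝ᵥ (Lam1 Y X₁ X₂ *ᵥ y) = sigTil1sq y Y X₁ X₂ := by
  rw [Lam1, smul_mulVec, dotProduct_smul, smul_eq_mul, sigTil1sq, beta2S, sub_mulVec_mulVec_eq,
    B2, dotProduct_residual_mulVec_residual h.N1_isSymm h.isIdempotentElem_N1 h.isUnit_gram_N1]

theorem dotProduct_Lam4_mulVec : y ⬝ᵥ (Lam4 Y X₁ *ᵥ y) = sigHat2 y Y X₁ := by
  rw [Lam4, smul_mulVec, dotProduct_smul, smul_eq_mul, sigHat2, betaOLS, sub_mulVec_mulVec_eq,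
    B1, dotProduct_residual_mulVec_residual (M1_isSymm X₁) h.isIdempotentElem_M1
      h.isUnit_gram_M1]

theorem dotProduct_Lam2_mulVec : y ⬝ᵥ (Lam2 Y X₁ X₂ *ᵥ y) = sigTil2sq y Y X₁ X₂ := by
  rw [h.Lam2_eq_Lam4_sub_Psi0, sub_mulVec, dotProduct_sub, h.dotProduct_Lam4_mulVec,
    dotProduct_Psi0_mulVec, sigTil2sq]

theorem dotProduct_Lam3_mulVec : y ⬝ᵥ (Lam3 Y X₁ X₂ *ᵥ y) = sigTil2 y Y X₁ X₂ := by
  have hN2 : N2 Y X₁ X₂ * M1 X₁ = M1 X₁ * (1 - Y * B2 Y X₁ X₂) := by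
    rw [N2, Matrix.sub_mul, Matrix.mul_assoc, h.B2_mul_M1, Matrix.mul_sub, Matrix.mul_assoc,
      Matrix.one_mul, Matrix.mul_one]
  have hM1N2 : M1 X₁ * (N2 Y X₁ X₂)ᵀ = (N2 Y X₁ X₂ * M1 X₁)ᵀ := by
    rw [transpose_mul, (M1_isSymm X₁).eq]
  rw [Lam3, smul_mulVec, dotProduct_smul, smul_eq_mul, hM1N2, Matrix.mul_assoc, hN2,
    dotProduct_transpose_mul_self_mulVec, ← mulVec_mulVec,
    ← dotProduct_mulVec_self_of_isSymm_of_idem (M1_isSymm X₁) h.isIdempotentElem_M1,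
    sigTil2, beta2S, sub_mulVec_mulVec_eq]

end RankCond

end WuModel

theorem stmt12_general {T G k₁ k₂ : ℕ}
    (hT : 0 < T)
    (y : Fin T → ℝ) (Y : Matrix (Fin T) (Fin G) ℝ)
    (X₁ : Matrix (Fin T) (Fin k₁) ℝ) (X₂ : Matrix (Fin T) (Fin k₂) ℝ)
    (hrank : RankCond Y X₁ X₂) :
    (sigTil1sq y Y X₁ X₂ ≠ 0 →
      IsUnit (sigTil1sq y Y X₁ X₂ • Dhat Y X₁ X₂) ∧
      ((k₂ : ℝ) - (G : ℝ)) / (G : ℝ) *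
          ((beta2S y Y X₁ X₂ - betaOLS y Y X₁) ⬝ᵥ
            ((sigTil1sq y Y X₁ X₂ • Dhat Y X₁ X₂)⁻¹ *ᵥ
              (beta2S y Y X₁ X₂ - betaOLS y Y X₁)))
        = ((k₂ : ℝ) - (G : ℝ)) / (G : ℝ) *
            (y ⬝ᵥ (Psi0 Y X₁ X₂ *ᵥ y) / (y ⬝ᵥ (Lam1 Y X₁ X₂ *ᵥ y)))) ∧
    (sigTil2sq y Y X₁ X₂ ≠ 0 →
      IsUnit (sigTil2sq y Y X₁ X₂ • Dhat Y X₁ X₂) ∧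
      ((T : ℝ) - (k₁ : ℝ) - 2 * (G : ℝ)) / (G : ℝ) *
          ((beta2S y Y X₁ X₂ - betaOLS y Y X₁) ⬝ᵥ
            ((sigTil2sq y Y X₁ X₂ • Dhat Y X₁ X₂)⁻¹ *ᵥ
              (beta2S y Y X₁ X₂ - betaOLS y Y X₁)))
        = ((T : ℝ) - (k₁ : ℝ) - 2 * (G : ℝ)) / (G : ℝ) *
            (y ⬝ᵥ (Psi0 Y X₁ X₂ *ᵥ y) / (y ⬝ᵥ (Lam2 Y X₁ X₂ *ᵥ y)))) ∧
    (sigTil2 y Y X₁ X₂ ≠ 0 →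
      IsUnit (sigTil2 y Y X₁ X₂ • Dhat Y X₁ X₂) ∧
      ((T : ℝ) - (k₁ : ℝ) - (G : ℝ)) *
          ((beta2S y Y X₁ X₂ - betaOLS y Y X₁) ⬝ᵥ
            ((sigTil2 y Y X₁ X₂ • Dhat Y X₁ X₂)⁻¹ *ᵥ
              (beta2S y Y X₁ X₂ - betaOLS y Y X₁)))
        = ((T : ℝ) - (k₁ : ℝ) - (G : ℝ)) *
            (y ⬝ᵥ (Psi0 Y X₁ X₂ *ᵥ y) / (y ⬝ᵥ (Lam3 Y X₁ X₂ *ᵥ y)))) ∧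
    (sigHat2 y Y X₁ ≠ 0 →
      IsUnit (sigHat2 y Y X₁ • Dhat Y X₁ X₂) ∧
      ((T : ℝ) - (k₁ : ℝ) - (G : ℝ)) *
          ((beta2S y Y X₁ X₂ - betaOLS y Y X₁) ⬝ᵥ
            ((sigHat2 y Y X₁ • Dhat Y X₁ X₂)⁻¹ *ᵥ
              (beta2S y Y X₁ X₂ - betaOLS y Y X₁)))
        = ((T : ℝ) - (k₁ : ℝ) - (G : ℝ)) *
            (y ⬝ᵥ (Psi0 Y X₁ X₂ *ᵥ y) / (y ⬝ᵥ (Lam4 Y X₁ *ᵥ y)))) := by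
  have hΔ := hrank.isUnit_Dhat hT
  have wu : ∀ {s κ : ℝ} {d : Fin G → ℝ}, s ≠ 0 →
      IsUnit (s • Dhat Y X₁ X₂) ∧
        κ * (d ⬝ᵥ ((s • Dhat Y X₁ X₂)⁻¹ *ᵥ d)) = κ * (d ⬝ᵥ ((Dhat Y X₁ X₂)⁻¹ *ᵥ d) / s) :=
    fun hs => ⟨isUnit_smul_of_ne_zero hs hΔ, by rw [dotProduct_inv_smul_mulVec hs hΔ]⟩
  rw [dotProduct_Psi0_mulVec, hrank.dotProduct_Lam1_mulVec, hrank.dotProduct_Lam2_mulVec,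
    hrank.dotProduct_Lam3_mulVec, hrank.dotProduct_Lam4_mulVec]
  exact ⟨wu, wu, wu, wu⟩

/-- **Quadratic-form representations of the Wu statistics.**  Under the rank condition,
for each `l ∈ {1,2,3,4}` with `σ̃_l² ≠ 0`, the matrix `Σ̃_l = σ̃_l²Δ̂` is invertible and
`T_l = κ_l(β̃−β̂)ᵀΣ̃_l⁻¹(β̃−β̂) = κ_l·(yᵀΨ₀y)/(yᵀΛ_ly)`, where the scaling factors are
`σ̃₁², σ̃₂², σ̃₃² = σ̃², σ̃₄² = σ̂²` and `κ₁ = (k₂−G)/G`, `κ₂ = (T−k₁−2G)/G`,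
`κ₃ = κ₄ = T−k₁−G`. -/
theorem stmt12 {T G k₁ k₂ : ℕ}
    (hT : 0 < T) (hG : 0 < G) (hk₁ : 0 < k₁) (hk₂ : 0 < k₂)
    (y : Fin T → ℝ) (Y : Matrix (Fin T) (Fin G) ℝ)
    (X₁ : Matrix (Fin T) (Fin k₁) ℝ) (X₂ : Matrix (Fin T) (Fin k₂) ℝ)
    (hrank : RankCond Y X₁ X₂) :
    (sigTil1sq y Y X₁ X₂ ≠ 0 →
      IsUnit (sigTil1sq y Y X₁ X₂ • Dhat Y X₁ X₂) ∧
      ((k₂ : ℝ) - (G : ℝ)) / (G : ℝ) *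
          ((beta2S y Y X₁ X₂ - betaOLS y Y X₁) ⬝ᵥ
            ((sigTil1sq y Y X₁ X₂ • Dhat Y X₁ X₂)⁻¹ *ᵥ
              (beta2S y Y X₁ X₂ - betaOLS y Y X₁)))
        = ((k₂ : ℝ) - (G : ℝ)) / (G : ℝ) *
            (y ⬝ᵥ (Psi0 Y X₁ X₂ *ᵥ y) / (y ⬝ᵥ (Lam1 Y X₁ X₂ *ᵥ y)))) ∧
    (sigTil2sq y Y X₁ X₂ ≠ 0 →
      IsUnit (sigTil2sq y Y X₁ X₂ • Dhat Y X₁ X₂) ∧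
      ((T : ℝ) - (k₁ : ℝ) - 2 * (G : ℝ)) / (G : ℝ) *
          ((beta2S y Y X₁ X₂ - betaOLS y Y X₁) ⬝ᵥ
            ((sigTil2sq y Y X₁ X₂ • Dhat Y X₁ X₂)⁻¹ *ᵥ
              (beta2S y Y X₁ X₂ - betaOLS y Y X₁)))
        = ((T : ℝ) - (k₁ : ℝ) - 2 * (G : ℝ)) / (G : ℝ) *
            (y ⬝ᵥ (Psi0 Y X₁ X₂ *ᵥ y) / (y ⬝ᵥ (Lam2 Y X₁ X₂ *ᵥ y)))) ∧
    (sigTil2 y Y X₁ X₂ ≠ 0 →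
      IsUnit (sigTil2 y Y X₁ X₂ • Dhat Y X₁ X₂) ∧
      ((T : ℝ) - (k₁ : ℝ) - (G : ℝ)) *
          ((beta2S y Y X₁ X₂ - betaOLS y Y X₁) ⬝ᵥ
            ((sigTil2 y Y X₁ X₂ • Dhat Y X₁ X₂)⁻¹ *ᵥ
              (beta2S y Y X₁ X₂ - betaOLS y Y X₁)))
        = ((T : ℝ) - (k₁ : ℝ) - (G : ℝ)) *
            (y ⬝ᵥ (Psi0 Y X₁ X₂ *ᵥ y) / (y ⬝ᵥ (Lam3 Y X₁ X₂ *ᵥ y)))) ∧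
    (sigHat2 y Y X₁ ≠ 0 →
      IsUnit (sigHat2 y Y X₁ • Dhat Y X₁ X₂) ∧
      ((T : ℝ) - (k₁ : ℝ) - (G : ℝ)) *
          ((beta2S y Y X₁ X₂ - betaOLS y Y X₁) ⬝ᵥ
            ((sigHat2 y Y X₁ • Dhat Y X₁ X₂)⁻¹ *ᵥ
              (beta2S y Y X₁ X₂ - betaOLS y Y X₁)))
        = ((T : ℝ) - (k₁ : ℝ) - (G : ℝ)) *
            (y ⬝ᵥ (Psi0 Y X₁ X₂ *ᵥ y) / (y ⬝ᵥ (Lam4 Y X₁ *ᵥ y)))) :=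
  stmt12_general hT y Y X₁ X₂ hrank
end
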